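/- arXiv:1602.05040 — 6 statements merged into one kernel-verified Lean document; each statement's English description precedes it below -/
import Mathlib

section
/- If a logic F admits counter-model merging and a proof system Ω is complete for F, then Ω is refutation complete for the fragment F ∪ ∼F: every unsatisfiable set Φ ⊆ F ∪ ∼F derives both φ and ∼φ for some formula φ. -/
/-- Formulas of the Boolean closure B(F): the closure of a set F of base
formulas under strong negation ∼ and material implication ⇾. -/
inductive TForm (F : Type) : Type where
  | base : F → TForm F
  | sneg : TForm F → TForm F
  | mimp : TForm F → TForm F → TForm F

/-- A (Hilbert-style) proof system: a set of axioms and a set of inference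
rules, each with a finite list of premises. -/
structure ProofSystem (Form : Type) where
  ax : Set Form
  rules : Set (List Form × Form)

/-- Derivability from a set of premises Φ in the proof system Ω. -/
inductive Derives {Form : Type} (Ω : ProofSystem Form) (Φ : Set Form) : Form → Prop where
  | prem {φ : Form} : φ ∈ Φ → Derives Ω Φ φ
  | ax {φ : Form} : φ ∈ Ω.ax → Derives Ω Φ φ
  | rule {l : List Form} {φ : Form} : (l, φ) ∈ Ω.rules →
      (∀ ξ ∈ l, Derives Ω Φ ξ) → Derives Ω Φ φ

/-- Ω extends the system L: all substitution instances of the three lifted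
propositional axiom schemes are axioms, and modus ponens for ⇾ is a rule. -/
def ExtendsL {F : Type} (Ω : ProofSystem (TForm F)) : Prop :=
  (∀ φ ψ : TForm F, TForm.mimp φ (TForm.mimp ψ φ) ∈ Ω.ax) ∧
  (∀ φ ψ θ : TForm F,
    TForm.mimp (TForm.mimp φ (TForm.mimp ψ θ))
      (TForm.mimp (TForm.mimp φ ψ) (TForm.mimp φ θ)) ∈ Ω.ax) ∧
  (∀ φ ψ : TForm F,
    TForm.mimp (TForm.mimp (TForm.sneg φ) (TForm.sneg ψ)) (TForm.mimp ψ φ) ∈ Ω.ax) ∧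
  (∀ φ ψ : TForm F, ([φ, TForm.mimp φ ψ], ψ) ∈ Ω.rules)

/-- Ω has weakening: every inference rule can be carried out under an
arbitrary additional hypothesis φ. -/
def HasWeakening {F : Type} (Ω : ProofSystem (TForm F)) : Prop :=
  ∀ r ∈ Ω.rules, ∀ φ : TForm F,
    Derives Ω {χ | ∃ ξ ∈ r.1, χ = TForm.mimp φ ξ} (TForm.mimp φ r.2)

/-- Φ is inconsistent in Ω if it derives every formula. -/
def Inconsistent {Form : Type} (Ω : ProofSystem Form) (Φ : Set Form) : Prop :=
  ∀ ξ : Form, Derives Ω Φ ξ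

/-- Team-logical satisfaction on the Boolean closure B(F), given the
satisfaction relation `sat` of the base logic F. -/
def TSat {Form Val : Type} (sat : Val → Form → Prop) (A : Val) : TForm Form → Prop
  | .base f => sat A f
  | .sneg φ => ¬ TSat sat A φ
  | .mimp φ ψ => TSat sat A φ → TSat sat A ψ


theorem Derives.mono {Form : Type} {Ω : ProofSystem Form} {Φ Ψ : Set Form}
    (h : Φ ⊆ Ψ) {φ : Form} (d : Derives Ω Φ φ) : Derives Ω Ψ φ := by
  induction d with
  | prem hp => exact Derives.prem (h hp)
  | ax ha => exact Derives.ax ha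
  | rule hr _ ih => exact Derives.rule hr ih

/-- If the logic F admits counter-model merging and Ω is complete for F, then
Ω is refutation complete for the fragment F ∪ ∼F: every unsatisfiable subset of
the fragment derives both φ and ∼φ for some formula φ. -/
theorem refutation_completeness_of_fragment {Form Val : Type}
    (sat : Val → Form → Prop) (Ω : ProofSystem (TForm Form))
    (hmerge : ∀ Γ Δ : Set Form,
      (∀ δ ∈ Δ, ∃ A : Val, (∀ γ ∈ Γ, sat A γ) ∧ ¬ sat A δ) →
      ∃ A : Val, (∀ γ ∈ Γ, sat A γ) ∧ ∀ δ ∈ Δ, ¬ sat A δ)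
    (hcomp : ∀ (Γ : Set Form) (φ : Form),
      (∀ A : Val, (∀ γ ∈ Γ, sat A γ) → sat A φ) →
      Derives Ω (TForm.base '' Γ) (TForm.base φ)) :
    ∀ Φ : Set (TForm Form),
      (∀ φ ∈ Φ, (∃ f, φ = TForm.base f) ∨ (∃ f, φ = TForm.sneg (TForm.base f))) →
      (¬ ∃ A : Val, ∀ φ ∈ Φ, TSat sat A φ) →
      ∃ φ : TForm Form, Derives Ω Φ φ ∧ Derives Ω Φ (TForm.sneg φ) := by
  intro Φ hfrag hunsat
  set Γ : Set Form := {f | TForm.base f ∈ Φ}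
  set Δ : Set Form := {f | TForm.sneg (TForm.base f) ∈ Φ}
  have key : ∃ δ ∈ Δ, ∀ A : Val, (∀ γ ∈ Γ, sat A γ) → sat A δ := by
    by_contra hc
    push_neg at hc
    obtain ⟨A, hA, hA'⟩ := hmerge Γ Δ (fun δ hδ => by
      obtain ⟨B, hB, hB'⟩ := hc δ hδ
      exact ⟨B, hB, hB'⟩)
    apply hunsat
    refine ⟨A, fun φ hφ => ?_⟩
    rcases hfrag φ hφ with ⟨f, rfl⟩ | ⟨f, rfl⟩
    · exact hA f hφ
    · exact hA' f hφ
  obtain ⟨δ, hδ, hval⟩ := key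
  refine ⟨TForm.base δ, ?_, Derives.prem hδ⟩
  exact (hcomp Γ δ hval).mono (by rintro _ ⟨f, hf, rfl⟩; exact hf)
end

section
/- If Ω ⪰ L is refutation complete for F ∪ ∼F and has the deduction theorem, then Ω is refutation complete for B(F), the closure of F under ∼ and ⇾: every consistent set Φ ⊆ B(F) is satisfiable (equivalently every unsatisfiable set is inconsistent). -/
section Aux
variable {Form : Type} {Ω : ProofSystem (TForm Form)}

lemma D_mono {Φ Φ' : Set (TForm Form)} (h : Φ ⊆ Φ') {φ} (hd : Derives Ω Φ φ) :
    Derives Ω Φ' φ := by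
  induction hd with
  | prem h' => exact .prem (h h')
  | ax h' => exact .ax h'
  | rule hr _ ih => exact .rule hr ih

lemma D_mp (hL : ExtendsL Ω) {Φ : Set (TForm Form)} {φ ψ}
    (h1 : Derives Ω Φ φ) (h2 : Derives Ω Φ (TForm.mimp φ ψ)) : Derives Ω Φ ψ := by
  refine Derives.rule (hL.2.2.2 φ ψ) ?_
  intro ξ hξ
  simp only [List.mem_cons, List.mem_singleton, List.not_mem_nil, or_false] at hξ
  rcases hξ with rfl | rfl
  · exact h1
  · exact h2

lemma D_exfalso (hL : ExtendsL Ω) {Φ : Set (TForm Form)} {φ ψ}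
    (h1 : Derives Ω Φ φ) (h2 : Derives Ω Φ (TForm.sneg φ)) : Derives Ω Φ ψ := by
  have k1 : Derives Ω Φ (TForm.mimp (TForm.sneg ψ) (TForm.sneg φ)) :=
    D_mp hL h2 (.ax (hL.1 _ _))
  exact D_mp hL h1 (D_mp hL k1 (.ax (hL.2.2.1 ψ φ)))

lemma D_dne (hL : ExtendsL Ω) {Φ : Set (TForm Form)} {φ}
    (h : Derives Ω Φ (TForm.sneg (TForm.sneg φ))) : Derives Ω Φ φ := by
  have s1 : Derives Ω Φ (TForm.mimp (TForm.sneg (TForm.sneg (TForm.sneg (TForm.sneg φ))))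
      (TForm.sneg (TForm.sneg φ))) := D_mp hL h (.ax (hL.1 _ _))
  have s3 : Derives Ω Φ (TForm.mimp (TForm.sneg φ) (TForm.sneg (TForm.sneg (TForm.sneg φ)))) :=
    D_mp hL s1 (.ax (hL.2.2.1 _ _))
  exact D_mp hL h (D_mp hL s3 (.ax (hL.2.2.1 _ _)))

lemma D_negIntro (hDed : ∀ (Φ : Set (TForm Form)) (φ ψ : TForm Form),
      Derives Ω Φ (TForm.mimp φ ψ) ↔ Derives Ω (Φ ∪ {φ}) ψ) (hL : ExtendsL Ω) {Φ : Set (TForm Form)} {φ ψ}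
    (h1 : Derives Ω Φ (TForm.mimp φ ψ)) (h2 : Derives Ω Φ (TForm.mimp φ (TForm.sneg ψ))) :
    Derives Ω Φ (TForm.sneg φ) := by
  have hid : Derives Ω Φ (TForm.mimp φ φ) := (hDed Φ φ φ).mpr (.prem (by simp))
  have key : Derives Ω Φ (TForm.mimp (TForm.sneg (TForm.sneg φ))
      (TForm.sneg (TForm.mimp φ φ))) := by
    refine (hDed Φ _ _).mpr ?_
    have hφ : Derives Ω (Φ ∪ {TForm.sneg (TForm.sneg φ)}) φ :=
      D_dne hL (.prem (by simp))
    have hm : Φ ⊆ Φ ∪ {TForm.sneg (TForm.sneg φ)} := Set.subset_union_left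
    exact D_exfalso hL (D_mp hL hφ (D_mono hm h1)) (D_mp hL hφ (D_mono hm h2))
  exact D_mp hL hid (D_mp hL key (.ax (hL.2.2.1 _ _)))

/-- consistency -/
def ConS {Form : Type} (Ω : ProofSystem (TForm Form)) (Φ : Set (TForm Form)) : Prop :=
  ¬ ∃ φ, Derives Ω Φ φ ∧ Derives Ω Φ (TForm.sneg φ)

lemma D_of_incon (hDed : ∀ (Φ : Set (TForm Form)) (φ ψ : TForm Form),
      Derives Ω Φ (TForm.mimp φ ψ) ↔ Derives Ω (Φ ∪ {φ}) ψ) (hL : ExtendsL Ω) {Φ : Set (TForm Form)} {φ}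
    (h : ¬ ConS Ω (Φ ∪ {φ})) : Derives Ω Φ (TForm.sneg φ) := by
  rw [ConS, not_not] at h
  obtain ⟨ψ, h1, h2⟩ := h
  exact D_negIntro hDed hL ((hDed Φ φ ψ).mpr h1) ((hDed Φ φ _).mpr h2)

lemma chain_list {c : Set (Set (TForm Form))} (hc : IsChain (· ⊆ ·) c)
    (hne : c.Nonempty) (l : List (TForm Form))
    (h : ∀ ξ ∈ l, ∃ Ψ ∈ c, Derives Ω Ψ ξ) :
    ∃ Ψ ∈ c, ∀ ξ ∈ l, Derives Ω Ψ ξ := by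
  induction l with
  | nil => obtain ⟨Ψ, hΨ⟩ := hne; exact ⟨Ψ, hΨ, by simp⟩
  | cons a l ih =>
    obtain ⟨Ψ₁, hm1, hd1⟩ := h a (by simp)
    obtain ⟨Ψ₂, hm2, hd2⟩ := ih (fun ξ hξ => h ξ (by simp [hξ]))
    rcases eq_or_ne Ψ₁ Ψ₂ with rfl | hne'
    · exact ⟨Ψ₁, hm1, by
        intro ξ hξ; rcases List.mem_cons.1 hξ with rfl | hξ
        · exact hd1
        · exact hd2 ξ hξ⟩
    · rcases hc hm1 hm2 hne' with hsub | hsub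
      · exact ⟨Ψ₂, hm2, by
          intro ξ hξ; rcases List.mem_cons.1 hξ with rfl | hξ
          · exact D_mono hsub hd1
          · exact hd2 ξ hξ⟩
      · exact ⟨Ψ₁, hm1, by
          intro ξ hξ; rcases List.mem_cons.1 hξ with rfl | hξ
          · exact hd1
          · exact D_mono hsub (hd2 ξ hξ)⟩

lemma D_chain {c : Set (Set (TForm Form))} (hc : IsChain (· ⊆ ·) c)
    (hne : c.Nonempty) {φ} (h : Derives Ω (⋃₀ c) φ) : ∃ Ψ ∈ c, Derives Ω Ψ φ := by
  induction h with
  | prem h' =>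
    obtain ⟨Ψ, hΨ, hmem⟩ := h'
    exact ⟨Ψ, hΨ, .prem hmem⟩
  | ax h' => exact ⟨hne.choose, hne.choose_spec, .ax h'⟩
  | rule hr _ ih =>
    obtain ⟨Ψ, hΨ, hall⟩ := chain_list hc hne _ ih
    exact ⟨Ψ, hΨ, .rule hr hall⟩

lemma D_cut {Φ Γ : Set (TForm Form)} (h : ∀ χ ∈ Γ, Derives Ω Φ χ) {φ}
    (hd : Derives Ω Γ φ) : Derives Ω Φ φ := by
  induction hd with
  | prem h' => exact h _ h'
  | ax h' => exact .ax h'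
  | rule hr _ ih => exact .rule hr ih

end Aux

/-- If Ω ⪰ L is refutation complete for the fragment F ∪ ∼F and has the
deduction theorem, then Ω is refutation complete for all of B(F): every
unsatisfiable Φ ⊆ B(F) derives a contradiction (equivalently, every consistent
set is satisfiable). -/
theorem refutation_completeness_of_boolean_closure {Form Val : Type} [Countable Form]
    (sat : Val → Form → Prop) (Ω : ProofSystem (TForm Form))
    (hL : ExtendsL Ω)
    (hDed : ∀ (Φ : Set (TForm Form)) (φ ψ : TForm Form),
      Derives Ω Φ (TForm.mimp φ ψ) ↔ Derives Ω (Φ ∪ {φ}) ψ)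
    (hrc : ∀ Φ : Set (TForm Form),
      (∀ φ ∈ Φ, (∃ f, φ = TForm.base f) ∨ (∃ f, φ = TForm.sneg (TForm.base f))) →
      (¬ ∃ A : Val, ∀ φ ∈ Φ, TSat sat A φ) →
      ∃ φ : TForm Form, Derives Ω Φ φ ∧ Derives Ω Φ (TForm.sneg φ)) :
    ∀ Φ : Set (TForm Form),
      (¬ ∃ A : Val, ∀ φ ∈ Φ, TSat sat A φ) →
      ∃ φ : TForm Form, Derives Ω Φ φ ∧ Derives Ω Φ (TForm.sneg φ) := by
  intro Φ hunsat
  by_contra hcon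
  apply hunsat
  have hzorn := zorn_subset_nonempty {Ψ : Set (TForm Form) | Φ ⊆ Ψ ∧ ConS Ω Ψ} ?_ Φ
      ⟨Set.Subset.rfl, hcon⟩
  · obtain ⟨M, hΦM, hmax⟩ := hzorn
    have hConM : ConS Ω M := hmax.1.2
    have hcomp : ∀ φ, Derives Ω M φ ∨ Derives Ω M (TForm.sneg φ) := by
      intro φ
      by_cases h : ConS Ω (M ∪ {φ})
      · left
        have hsub : M ∪ {φ} ⊆ M :=
          hmax.2 ⟨hΦM.trans Set.subset_union_left, h⟩ Set.subset_union_left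
        exact .prem (hsub (by simp))
      · right; exact D_of_incon hDed hL h
    have hA : ∃ A : Val, ∀ χ ∈ {χ | Derives Ω M χ ∧
        ((∃ f, χ = TForm.base f) ∨ (∃ f, χ = TForm.sneg (TForm.base f)))}, TSat sat A χ := by
      by_contra h
      obtain ⟨φ, h1, h2⟩ := hrc _ (fun χ hχ => hχ.2) h
      exact hConM ⟨φ, D_cut (fun χ hχ => hχ.1) h1, D_cut (fun χ hχ => hχ.1) h2⟩
    obtain ⟨A, hA⟩ := hA
    have truth : ∀ φ : TForm Form, TSat sat A φ ↔ Derives Ω M φ := by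
      intro φ
      induction φ with
      | base f =>
        constructor
        · intro hs
          by_contra hnd
          rcases hcomp (TForm.base f) with h | h
          · exact hnd h
          · exact hA _ ⟨h, Or.inr ⟨f, rfl⟩⟩ hs
        · intro hd
          exact hA _ ⟨hd, Or.inl ⟨f, rfl⟩⟩
      | sneg φ ih =>
        show (¬ TSat sat A φ) ↔ _
        rw [ih]
        constructor
        · intro h
          rcases hcomp φ with h' | h'
          · exact absurd h' h
          · exact h'
        · intro h hd
          exact hConM ⟨φ, hd, h⟩
      | mimp φ ψ ih1 ih2 =>
        show (TSat sat A φ → TSat sat A ψ) ↔ _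
        rw [ih1, ih2]
        constructor
        · intro h
          by_cases hd : Derives Ω M φ
          · exact (hDed M φ ψ).mpr (D_mono Set.subset_union_left (h hd))
          · rcases hcomp φ with h' | h'
            · exact absurd h' hd
            · exact (hDed M φ ψ).mpr
                (D_exfalso hL (.prem (by simp)) (D_mono Set.subset_union_left h'))
        · intro h hd
          exact D_mp hL hd h
    exact ⟨A, fun χ hχ => (truth χ).2 (.prem (hΦM hχ))⟩
  · intro c hcS hchain hne
    refine ⟨⋃₀ c, ⟨?_, ?_⟩, fun s hs => Set.subset_sUnion_of_mem hs⟩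
    · obtain ⟨Ψ, hΨ⟩ := hne
      exact ((hcS hΨ).1).trans (Set.subset_sUnion_of_mem hΨ)
    · rintro ⟨φ, h1, h2⟩
      have hprem : ∀ ξ ∈ [φ, TForm.sneg φ], ∃ Ψ ∈ c, Derives Ω Ψ ξ := by
        intro ξ hξ
        simp only [List.mem_cons, List.mem_singleton, List.not_mem_nil, or_false] at hξ
        rcases hξ with rfl | rfl
        · exact (D_chain hchain hne h1)
        · exact (D_chain hchain hne h2)
      obtain ⟨Ψ, hΨ, hall⟩ := chain_list hchain hne [φ, TForm.sneg φ] hprem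
      exact (hcS hΨ).2 ⟨φ, hall φ (by simp), hall _ (by simp)⟩
end

section
/- In strict team semantics for propositional team logic, there is no finite set Φ of B(PL) formulas equivalent to the formula NE ⩓ ∼(NE ⊗ NE), i.e., no finite set of Boolean combinations of classical propositional formulas whose joint models are exactly the one-element teams. -/
/-- Propositional formulas over countably many variables. -/
inductive PLForm : Type where
  | var : ℕ → PLForm
  | neg : PLForm → PLForm
  | imp : PLForm → PLForm → PLForm

/-- Classical satisfaction of a propositional formula by an assignment. -/
def PLForm.eval (s : ℕ → Bool) : PLForm → Bool
  | .var n => s n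
  | .neg a => !(a.eval s)
  | .imp a b => !(a.eval s) || b.eval s

/-- Team semantics: a team satisfies a classical formula iff all its members do. -/
def TeamSat (T : Set (ℕ → Bool)) (α : PLForm) : Prop := ∀ s ∈ T, α.eval s = true

/-- Formulas of B(PL): Boolean closure of PL under strong negation ∼ and
material implication ⇾. -/
inductive BForm : Type where
  | base : PLForm → BForm
  | sneg : BForm → BForm
  | mimp : BForm → BForm → BForm

/-- Team satisfaction for B(PL). -/
def BSat (T : Set (ℕ → Bool)) : BForm → Prop
  | .base α => TeamSat T α
  | .sneg φ => ¬ BSat T φ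
  | .mimp φ ψ => BSat T φ → BSat T ψ
def PLForm.vars : PLForm → Finset ℕ
  | .var n => {n}
  | .neg a => a.vars
  | .imp a b => a.vars ∪ b.vars

def BForm.vars : BForm → Finset ℕ
  | .base α => α.vars
  | .sneg φ => φ.vars
  | .mimp φ ψ => φ.vars ∪ ψ.vars

lemma eval_congr (a b : ℕ → Bool) : ∀ α : PLForm,
    (∀ n ∈ α.vars, a n = b n) → α.eval a = α.eval b
  | .var n, h => h n (by simp [PLForm.vars])
  | .neg c, h => by
      simp [PLForm.eval, eval_congr a b c (fun n hn => h n (by simpa [PLForm.vars] using hn))]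
  | .imp c d, h => by
      simp [PLForm.eval,
        eval_congr a b c (fun n hn => h n (by simp [PLForm.vars]; exact Or.inl hn)),
        eval_congr a b d (fun n hn => h n (by simp [PLForm.vars]; exact Or.inr hn))]

/-- In strict team semantics, no finite set of B(PL) formulas is equivalent to
NE ⩓ ∼(NE ⊗ NE), whose strict-semantics models are exactly the one-element teams:
a team satisfies it iff it is nonempty and admits no partition into two disjoint
nonempty subteams. -/
theorem no_finite_BPL_counting :
    ¬ ∃ Φ : Finset BForm, ∀ T : Set (ℕ → Bool),
      (∀ φ ∈ Φ, BSat T φ) ↔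
        (T.Nonempty ∧
          ¬ ∃ S U : Set (ℕ → Bool),
            S ∪ U = T ∧ Disjoint S U ∧ S.Nonempty ∧ U.Nonempty) := by
  rintro ⟨Φ, hΦ⟩
  set V : Finset ℕ := Φ.sup BForm.vars with hV
  set x : ℕ := (V.sup id) + 1 with hx
  have hxV : x ∉ V := by
    intro h
    have := Finset.le_sup (f := id) h
    simp only [id] at this
    have hx' : x = V.sup id + 1 := hx
    omega
  set s0 : ℕ → Bool := fun _ => false with hs0
  set s1 : ℕ → Bool := fun n => decide (n = x) with hs1
  have hne : s0 ≠ s1 := by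
    intro h
    have := congrFun h x
    simp [hs0, hs1] at this
  set T : Set (ℕ → Bool) := {s0, s1} with hT
  -- agreement lemma for formulas avoiding x
  have key : ∀ φ : BForm, x ∉ φ.vars → (BSat T φ ↔ BSat {s0} φ) := by
    intro φ
    induction φ with
    | base α =>
        intro hxa
        have hagree : α.eval s1 = α.eval s0 := by
          apply eval_congr
          intro n hn
          have : n ≠ x := fun h => hxa (h ▸ hn)
          simp [hs0, hs1, this]
        constructor
        · intro h t ht
          exact h t (by simp [hT]; left; simpa using ht)
        · intro h t ht
          rcases ht with h0 | h1
          · exact h t (by simp [h0])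
          · simp only [Set.mem_singleton_iff] at h1
            rw [h1, hagree]
            exact h s0 (by simp)
    | sneg ψ ih =>
        intro hxa
        have := ih (by simpa [BForm.vars] using hxa)
        simp [BSat, this]
    | mimp ψ χ ih1 ih2 =>
        intro hxa
        have h1 := ih1 (fun h => hxa (by simp [BForm.vars]; exact Or.inl h))
        have h2 := ih2 (fun h => hxa (by simp [BForm.vars]; exact Or.inr h))
        simp [BSat, h1, h2]
  -- {s0} satisfies RHS
  have hsingle : (∀ φ ∈ Φ, BSat {s0} φ) := by
    rw [hΦ]
    refine ⟨⟨s0, rfl⟩, ?_⟩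
    rintro ⟨S, U, hSU, hdisj, ⟨a, ha⟩, ⟨b, hb⟩⟩
    have haS : a ∈ ({s0} : Set _) := hSU ▸ Set.mem_union_left _ ha
    have hbS : b ∈ ({s0} : Set _) := hSU ▸ Set.mem_union_right _ hb
    simp only [Set.mem_singleton_iff] at haS hbS
    exact Set.disjoint_left.mp hdisj ha (by rw [haS, ← hbS]; exact hb)
  -- T satisfies all of Φ
  have hTΦ : ∀ φ ∈ Φ, BSat T φ := by
    intro φ hφ
    have hxφ : x ∉ φ.vars := fun h => hxV (Finset.le_sup (α := Finset ℕ) hφ h)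
    exact (key φ hxφ).mpr (hsingle φ hφ)
  have := (hΦ T).mp hTΦ
  exact this.2 ⟨{s0}, {s1}, by simp [hT, Set.pair_comm], by simp [hne], ⟨s0, rfl⟩, ⟨s1, rfl⟩⟩
end

section
/- The splitting-distribution axiom for the diamond modality is sound for modal team logic: for any Kripke structure K and team of worlds T, T satisfies ◇(φ ⊗ ψ) if and only if T satisfies ◇φ ⊗ ◇ψ. -/
/-- T' is a successor team of T in the Kripke frame (W, R): every world of T
has a successor in T' and every world of T' has a predecessor in T. -/
def SuccTeam {W : Type*} (R : W → W → Prop) (T T' : Set W) : Prop :=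
  (∀ w ∈ T, ∃ v ∈ T', R w v) ∧ (∀ v ∈ T', ∃ w ∈ T, R w v)

/-- Soundness of the axiom ◇(φ ⊗ ψ) ↔ ◇φ ⊗ ◇ψ of modal team logic: for
arbitrary team properties P, Q (the semantics of φ and ψ), a team T has a
successor team admitting a lax split into a P-team and a Q-team iff T admits a
lax split into a team with a P-successor team and a team with a Q-successor
team. -/
theorem diamond_distributes_over_splitting {W : Type*} (R : W → W → Prop)
    (P Q : Set W → Prop) (T : Set W) :
    (∃ T' : Set W, SuccTeam R T T' ∧
      ∃ S U : Set W, S ∪ U = T' ∧ P S ∧ Q U) ↔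
    (∃ S U : Set W, S ∪ U = T ∧
      (∃ S' : Set W, SuccTeam R S S' ∧ P S') ∧
      (∃ U' : Set W, SuccTeam R U U' ∧ Q U')) := by
  constructor
  · rintro ⟨T', ⟨hfwd, hback⟩, S, U, hSU, hP, hQ⟩
    refine ⟨{w ∈ T | ∃ v ∈ S, R w v}, {w ∈ T | ∃ v ∈ U, R w v}, ?_, ⟨S, ⟨?_, ?_⟩, hP⟩,
      ⟨U, ⟨?_, ?_⟩, hQ⟩⟩
    · ext w
      simp only [Set.mem_union, Set.mem_setOf_eq]
      constructor
      · rintro (⟨h, _⟩ | ⟨h, _⟩) <;> exact h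
      · intro hw
        obtain ⟨v, hv, hrv⟩ := hfwd w hw
        rw [← hSU] at hv
        rcases hv with hv | hv
        · exact Or.inl ⟨hw, v, hv, hrv⟩
        · exact Or.inr ⟨hw, v, hv, hrv⟩
    · rintro w ⟨_, v, hv, hrv⟩; exact ⟨v, hv, hrv⟩
    · intro v hv
      obtain ⟨w, hw, hrw⟩ := hback v (hSU ▸ Set.mem_union_left _ hv)
      exact ⟨w, ⟨hw, v, hv, hrw⟩, hrw⟩
    · rintro w ⟨_, v, hv, hrv⟩; exact ⟨v, hv, hrv⟩
    · intro v hv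
      obtain ⟨w, hw, hrw⟩ := hback v (hSU ▸ Set.mem_union_right _ hv)
      exact ⟨w, ⟨hw, v, hv, hrw⟩, hrw⟩
  · rintro ⟨S, U, hSU, ⟨S', ⟨hSf, hSb⟩, hP⟩, ⟨U', ⟨hUf, hUb⟩, hQ⟩⟩
    refine ⟨S' ∪ U', ⟨?_, ?_⟩, S', U', rfl, hP, hQ⟩
    · intro w hw
      rw [← hSU] at hw
      rcases hw with hw | hw
      · obtain ⟨v, hv, h⟩ := hSf w hw
        exact ⟨v, Set.mem_union_left _ hv, h⟩
      · obtain ⟨v, hv, h⟩ := hUf w hw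
        exact ⟨v, Set.mem_union_right _ hv, h⟩
    · intro v hv
      rcases hv with hv | hv
      · obtain ⟨w, hw, h⟩ := hSb v hv
        exact ⟨w, hSU ▸ Set.mem_union_left _ hw, h⟩
      · obtain ⟨w, hw, h⟩ := hUb v hv
        exact ⟨w, hSU ▸ Set.mem_union_right _ hw, h⟩
end

section
/- Let Φ ⊆ FO ∪ ∼FO (first-order formulas and strongly negated first-order formulas). Then Φ is satisfiable in team semantics if and only if its first-order translation Φ_f is satisfiable in classical first-order semantics, where Φ_f replaces the free variables of each γ ∈ Φ ∩ FO by fresh constants c^x_δ for each ∼δ ∈ Φ ∩ ∼FO, and replaces each ∼δ(x₁,…,xₙ) by ¬δ(c^{x₁}_δ,…,c^{xₙ}_δ). -/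
open FirstOrder FirstOrder.Language

/-- Team satisfaction of a classical first-order formula: all assignments of
the team satisfy it. -/
def TeamSatFO (L : Language) (M : Type) [inst : L.Structure M]
    (T : Set (ℕ → M)) (γ : L.Formula ℕ) : Prop :=
  ∀ s ∈ T, γ.Realize s

/-- Team satisfaction of a strongly negated first-order formula ∼δ: the team
does not satisfy δ, i.e., some assignment falsifies δ. -/
def TeamSatNegFO (L : Language) (M : Type) [inst : L.Structure M]
    (T : Set (ℕ → M)) (δ : L.Formula ℕ) : Prop :=
  ∃ s ∈ T, ¬ δ.Realize s

/-- The sentence obtained from γ by replacing each free variable x by the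
fresh constant c x, in the expansion of L by constants from C. -/
def withConstantsSentence (L : Language) (C : Type) (c : ℕ → C)
    (γ : L.Formula ℕ) : (L[[C]]).Sentence :=
  BoundedFormula.subst ((L.lhomWithConstants C).onFormula γ)
    (fun x => Constants.term (L.con (c x)))

/-! A team satisfying `Φ` picks, for each `∼δ ∈ Φ`, an assignment falsifying `δ`; interpreting the
constants `c^x_δ` by these assignments turns the structure into a model of `Φ_f`, since the
formulas of `Φ ∩ FO` hold under every assignment of the team. Conversely, in a model of `Φ_f` the
assignments `x ↦ c^x_δ`, one for each `δ`, form a team satisfying `Φ` in the reduct to `L`. -/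

namespace FirstOrder.Language

variable {L : Language}

theorem realize_withConstantsSentence {C N : Type} [L[[C]].Structure N] [L.Structure N]
    [(L.lhomWithConstants C).IsExpansionOn N] (c : ℕ → C) (γ : L.Formula ℕ) :
    N ⊨ withConstantsSentence L C c γ ↔
      γ.Realize fun x => ((L.con (c x) : L[[C]].Constants) : N) := by
  rw [withConstantsSentence, Sentence.Realize, Formula.Realize, BoundedFormula.realize_subst]
  simp only [Term.realize_constants]
  exact LHom.realize_onFormula _ γ

/-- The team-semantic satisfaction of `Φ = Γ ∪ ∼Δ`. -/
def TeamSat (Γ Δ : Set (L.Formula ℕ)) {M : Type} [L.Structure M] (T : Set (ℕ → M)) : Prop :=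
  (∀ γ ∈ Γ, TeamSatFO L M T γ) ∧ ∀ δ ∈ Δ, TeamSatNegFO L M T δ

/-- `N` is a model of the translation `Φ_f` of `Φ = Γ ∪ ∼Δ`. -/
def RealizesTranslation (Γ Δ : Set (L.Formula ℕ)) (N : Type) [L[[ℕ × Δ]].Structure N] : Prop :=
  (∀ γ ∈ Γ, ∀ δ : Δ, N ⊨ withConstantsSentence L (ℕ × Δ) (fun x => (x, δ)) γ) ∧
    ∀ δ : Δ, N ⊨ withConstantsSentence L (ℕ × Δ) (fun x => (x, δ)) (Formula.not δ.1)

def constantTeam (D : Type) (N : Type) [L[[ℕ × D]].Structure N] : Set (ℕ → N) :=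
  Set.range fun (d : D) (x : ℕ) => ((L.con (x, d) : L[[ℕ × D]].Constants) : N)

theorem exists_realizesTranslation_of_teamSat {Γ Δ : Set (L.Formula ℕ)} {M : Type}
    [L.Structure M] {T : Set (ℕ → M)} (h : TeamSat Γ Δ T) :
    ∃ _ : L[[ℕ × Δ]].Structure M, RealizesTranslation Γ Δ M := by
  obtain ⟨hΓ, hΔ⟩ := h
  choose s hsT hs using fun δ : Δ => hΔ δ.1 δ.2
  let _ : (constantsOn (ℕ × Δ)).Structure M := constantsOn.structure fun p => s p.2 p.1
  refine ⟨inferInstance, fun γ hγ δ => ?_, fun δ => ?_⟩ <;> rw [realize_withConstantsSentence]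
  · exact hΓ γ hγ _ (hsT δ)
  · exact hs δ

theorem teamSat_constantTeam {Γ Δ : Set (L.Formula ℕ)} {N : Type} [L[[ℕ × Δ]].Structure N]
    [L.Structure N] [(L.lhomWithConstants (ℕ × Δ)).IsExpansionOn N]
    (h : RealizesTranslation Γ Δ N) : TeamSat Γ Δ (constantTeam (L := L) Δ N) := by
  obtain ⟨hΓ, hΔ⟩ := h
  refine ⟨?_, fun δ hδ => ⟨_, ⟨⟨δ, hδ⟩, rfl⟩, ?_⟩⟩
  · rintro γ hγ _ ⟨δ, rfl⟩
    exact (realize_withConstantsSentence _ γ).1 (hΓ γ hγ δ)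
  · exact (realize_withConstantsSentence _ (Formula.not δ)).1 (hΔ ⟨δ, hδ⟩)

end FirstOrder.Language

/-- A set Φ ⊆ FO ∪ ∼FO, given by its positive part Γ and negated part Δ, is
satisfiable in team semantics iff its first-order translation Φ_f — obtained by
replacing, for each ∼δ ∈ Δ, the free variables of the formulas by fresh
constants c^x_δ and replacing ∼δ by ¬δ(c^{x₁}_δ,…) — is satisfiable in
classical first-order semantics. -/
theorem team_satisfiable_iff_translation_satisfiable
    (L : Language) (Γ Δ : Set (L.Formula ℕ)) :
    (∃ (M : Type) (inst : L.Structure M) (_ : Nonempty M) (T : Set (ℕ → M)),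
      (∀ γ ∈ Γ, TeamSatFO L M (inst := inst) T γ) ∧
      (∀ δ ∈ Δ, TeamSatNegFO L M (inst := inst) T δ)) ↔
    (∃ (N : Type) (inst : (L[[ℕ × ↥Δ]]).Structure N) (_ : Nonempty N),
      (∀ γ ∈ Γ, ∀ δ : ↥Δ,
        Sentence.Realize (M := N)
          (withConstantsSentence L (ℕ × ↥Δ) (fun x => (x, δ)) γ)) ∧
      (∀ δ : ↥Δ,
        Sentence.Realize (M := N)
          (withConstantsSentence L (ℕ × ↥Δ) (fun x => (x, δ)) (Formula.not δ.1)))) := by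
  constructor
  · rintro ⟨M, _, hM, T, hT⟩
    obtain ⟨inst, hM'⟩ := exists_realizesTranslation_of_teamSat hT
    exact ⟨M, inst, hM, hM'⟩
  · rintro ⟨N, _, hN, hN'⟩
    let reduct : L.Structure N := (L.lhomWithConstants (ℕ × Δ)).reduct N
    have := LHom.isExpansionOn_reduct (L.lhomWithConstants (ℕ × Δ)) N
    exact ⟨N, reduct, hN, _, teamSat_constantTeam hN'⟩
end

section
/- Sentence interpolation for ∼FO: let Δ ⊆ ∼FO and α ∈ FO with Δ ⊨ α in team semantics. Then there is a first-order sentence ε (namely the universal closure of α) such that Δ ⊨ ε and ε ⊨ α. -/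
open FirstOrder FirstOrder.Language

/-!
Strong negations of first-order formulas are upward closed in the team, so a team satisfying Δ
can be enlarged to the team of all assignments. There Δ ⊨ α says that α holds under every
assignment, which is exactly the truth of the universal closure of α.
-/

namespace FirstOrder.Language.Formula

variable {L : Language} {α : Type*} [DecidableEq α]

noncomputable def allClosure (φ : L.Formula α) : L.Sentence :=
  iAlls φ.freeVarFinset (Formula.relabel Sum.inr (φ.restrictFreeVar id))

theorem realize_allClosure {M : Type*} [L.Structure M] [Nonempty M] (φ : L.Formula α) :
    φ.allClosure.Realize M ↔ ∀ v : α → M, φ.Realize v := by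
  simp only [Sentence.Realize, allClosure, Formula.realize_iAlls, Formula.realize_relabel]
  refine ⟨fun h v => ?_, fun h i => ?_⟩
  · exact (BoundedFormula.realize_restrictFreeVar (f := id) v (fun _ => rfl)).1 (h (v ∘ (↑)))
  · let v : α → M := Function.extend (↑) i fun _ => Classical.arbitrary M
    exact (BoundedFormula.realize_restrictFreeVar (f := id) v
      fun a => (Subtype.val_injective.extend_apply _ _ a).symm).2 (h v)

end FirstOrder.Language.Formula

theorem TeamSatNegFO.mono {L : Language} {M : Type} [L.Structure M] {T T' : Set (ℕ → M)}
    {δ : L.Formula ℕ} (hT : T ⊆ T') (hδ : TeamSatNegFO L M T δ) : TeamSatNegFO L M T' δ :=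
  let ⟨s, hs, hsδ⟩ := hδ
  ⟨s, hT hs, hsδ⟩

theorem forall_realize_of_teamSatNegFO_entails {L : Language} {M : Type} [L.Structure M]
    {Δ : Set (L.Formula ℕ)} {α : L.Formula ℕ}
    (h : ∀ T : Set (ℕ → M), (∀ δ ∈ Δ, TeamSatNegFO L M T δ) → TeamSatFO L M T α)
    {T : Set (ℕ → M)} (hT : ∀ δ ∈ Δ, TeamSatNegFO L M T δ) (s : ℕ → M) : α.Realize s :=
  h Set.univ (fun δ hδ => (hT δ hδ).mono (Set.subset_univ T)) s (Set.mem_univ s)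

/-- Sentence interpolation: if Δ ⊆ ∼FO entails α ∈ FO in team semantics, then
some first-order sentence ε (namely the universal closure of α) satisfies
Δ ⊨ ε and ε ⊨ α in team semantics. -/
theorem sentence_interpolation (L : Language) (Δ : Set (L.Formula ℕ))
    (α : L.Formula ℕ)
    (h : ∀ (M : Type) (inst : L.Structure M), Nonempty M →
      ∀ T : Set (ℕ → M),
        (∀ δ ∈ Δ, TeamSatNegFO L M (inst := inst) T δ) →
        TeamSatFO L M (inst := inst) T α) :
    ∃ ε : L.Sentence,
      (∀ (M : Type) (inst : L.Structure M), Nonempty M →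
        ∀ T : Set (ℕ → M),
          (∀ δ ∈ Δ, TeamSatNegFO L M (inst := inst) T δ) →
          ∀ s ∈ T, Sentence.Realize (M := M) ε) ∧
      (∀ (M : Type) (inst : L.Structure M), Nonempty M →
        ∀ T : Set (ℕ → M),
          (∀ s ∈ T, Sentence.Realize (M := M) ε) →
          TeamSatFO L M (inst := inst) T α) := by
  refine ⟨α.allClosure, fun M inst hM T hT _ _ => ?_, fun M inst _ T hε s hs => ?_⟩
  · exact α.realize_allClosure.2 (forall_realize_of_teamSatNegFO_entails (h M inst hM) hT)
  · exact α.realize_allClosure.1 (hε s hs) s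
end
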